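/- Let (Ω, μ) be a finite measure space, X a real Banach space, {τ_α}_{α∈Ω} ⊆ X and {f_α}_{α∈Ω} ⊆ X* such that (α,β) ↦ f_α(τ_β) is measurable and integrable on Ω × Ω, f_α(τ_α) = 1 for all α, ‖f_α‖ ≤ 1 and ‖τ_α‖ ≤ 1 for all α, and ∫_{Ω×Ω} f_α(τ_β) d(μ×μ)(α,β) ≥ 0. If the diagonal Δ ⊆ Ω × Ω is measurable and (μ×μ)((Ω×Ω)\Δ) > 0, then sup_{α≠β} f_α(τ_β) ≥ -(μ×μ)(Δ)/(μ×μ)((Ω×Ω)\Δ). -/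

import Mathlib

open MeasureTheory

theorem functional_continuous_rankin_bound
    {Ω : Type*} [MeasurableSpace Ω] (μ : Measure Ω) [IsFiniteMeasure μ]
    {X : Type*} [NormedAddCommGroup X] [NormedSpace ℝ X]
    (τ : Ω → X) (f : Ω → X →L[ℝ] ℝ)
    (hint : Integrable (fun p : Ω × Ω => f p.1 (τ p.2)) (μ.prod μ))
    (hdiag : ∀ α, f α (τ α) = 1)
    (hf : ∀ α, ‖f α‖ ≤ 1) (hτ : ∀ α, ‖τ α‖ ≤ 1)
    (hnonneg : 0 ≤ ∫ p : Ω × Ω, f p.1 (τ p.2) ∂(μ.prod μ))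
    (hΔ : MeasurableSet {p : Ω × Ω | p.1 = p.2})
    (hcompl : 0 < (μ.prod μ) {p : Ω × Ω | p.1 = p.2}ᶜ) :
    sSup {x : ℝ | ∃ α β : Ω, α ≠ β ∧ x = f α (τ β)} ≥
      -((μ.prod μ) {p : Ω × Ω | p.1 = p.2}).toReal /
        ((μ.prod μ) {p : Ω × Ω | p.1 = p.2}ᶜ).toReal := by
  set ν := μ.prod μ
  set Δ := {p : Ω × Ω | p.1 = p.2}
  set S := {x : ℝ | ∃ α β : Ω, α ≠ β ∧ x = f α (τ β)}
  set M := sSup S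
  have hbdd : BddAbove S := by
    refine ⟨1, fun x hx => ?_⟩
    obtain ⟨α, β, -, rfl⟩ := hx
    calc f α (τ β) ≤ |f α (τ β)| := le_abs_self _
      _ ≤ ‖f α‖ * ‖τ β‖ := by
          simpa [Real.norm_eq_abs] using (f α).le_opNorm (τ β)
      _ ≤ 1 * 1 := mul_le_mul (hf α) (hτ β) (norm_nonneg _) (by linarith [(f α).opNorm_nonneg])
      _ = 1 := one_mul 1
  have haseμ : IsFiniteMeasure ν := by infer_instance
  have hbfin : ν Δᶜ ≠ ⊤ := measure_ne_top ν _
  have hafin : ν Δ ≠ ⊤ := measure_ne_top ν _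
  have hb : (0:ℝ) < (ν Δᶜ).toReal := ENNReal.toReal_pos hcompl.ne' hbfin
  -- integral over diagonal
  have hIΔ : ∫ p in Δ, f p.1 (τ p.2) ∂ν = (ν Δ).toReal := by
    have : ∫ p in Δ, f p.1 (τ p.2) ∂ν = ∫ _ in Δ, (1:ℝ) ∂ν := by
      refine setIntegral_congr_fun hΔ fun p hp => ?_
      have : p.1 = p.2 := hp
      rw [this, hdiag]
    rw [this]
    simp
    rfl
  -- bound off diagonal
  have hIc : ∫ p in Δᶜ, f p.1 (τ p.2) ∂ν ≤ M * (ν Δᶜ).toReal := by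
    have h1 : ∫ p in Δᶜ, f p.1 (τ p.2) ∂ν ≤ ∫ _ in Δᶜ, M ∂ν := by
      refine setIntegral_mono_on (hint.integrableOn) (integrableOn_const (ne_of_lt ?_)) hΔ.compl
        fun p hp => ?_
      · exact lt_of_le_of_ne (le_top) hbfin
      · exact le_csSup hbdd ⟨p.1, p.2, hp, rfl⟩
    calc _ ≤ ∫ _ in Δᶜ, M ∂ν := h1
      _ = M * (ν Δᶜ).toReal := by simp [mul_comm]; exact Or.inl rfl
  have hsplit : ∫ p in Δ, f p.1 (τ p.2) ∂ν + ∫ p in Δᶜ, f p.1 (τ p.2) ∂ν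
      = ∫ p, f p.1 (τ p.2) ∂ν := integral_add_compl hΔ hint
  have key : 0 ≤ (ν Δ).toReal + M * (ν Δᶜ).toReal := by
    calc (0:ℝ) ≤ ∫ p, f p.1 (τ p.2) ∂ν := hnonneg
      _ = ∫ p in Δ, f p.1 (τ p.2) ∂ν + ∫ p in Δᶜ, f p.1 (τ p.2) ∂ν := hsplit.symm
      _ ≤ (ν Δ).toReal + M * (ν Δᶜ).toReal := by rw [hIΔ]; linarith
  rw [ge_iff_le, div_le_iff₀ hb]
  linarith
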